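/- Let Ψ⁺, Ψ⁻ and Φ be smooth complex-valued functions on Ω, write 𝓛 = 𝓛⁽⁺²⁾, and suppose 𝓛(𝓛−2)Φ = Ψ⁺ − (Ψ⁻)* on Ω. Set Ψᴰ := Ψ⁺ − (Ψ⁻)* and Ψᴿ := Ψ⁺ + (Ψ⁻)* + 12M ∂ₜΦ. Then the following algebraic identity holds on Ω: LLΨ⁺ + L̲L̲(Ψ⁻)* + (1/(6M))𝓛(𝓛−2)( LΨ⁺ − L̲(Ψ⁻)* ) = (1/2)(LL + L̲L̲)Ψᴿ + (1/(12M))𝓛(𝓛−2)(L − L̲)Ψᴿ − 6M(LL + L̲L̲)∂ₜΦ + (1/(6M))𝓛(𝓛−2)∂ₜΨᴰ. -/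

import Mathlib

/- Schwarzschild-Anti-de Sitter background: basic operators on functions
   u(t, r, ϑ, φ) with values in ℂ. -/

noncomputable section

open Filter Topology Set

namespace Grav

abbrev F4 : Type := ℝ → ℝ → ℝ → ℝ → ℂ

/-- `Δ(r) = r² + k²r⁴ − 2Mr`. -/
def Del (M k r : ℝ) : ℝ := r ^ 2 + k ^ 2 * r ^ 4 - 2 * M * r

/-- `∂ₜ`. -/
def dT (u : F4) : F4 := fun t r ϑ φ => deriv (fun s => u s r ϑ φ) t
/-- `∂ᵣ`. -/
def dR (u : F4) : F4 := fun t r ϑ φ => deriv (fun s => u t s ϑ φ) r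
/-- `∂_ϑ`. -/
def dTh (u : F4) : F4 := fun t r ϑ φ => deriv (fun s => u t r s φ) ϑ
/-- `∂_φ`. -/
def dPh (u : F4) : F4 := fun t r ϑ φ => deriv (fun s => u t r ϑ s) φ

/-- `L u = ∂ₜ u + (Δ/r²) ∂ᵣ u`. -/
def opL (M k : ℝ) (u : F4) : F4 := fun t r ϑ φ =>
  dT u t r ϑ φ + ((Del M k r / r ^ 2 : ℝ) : ℂ) * dR u t r ϑ φ

/-- `L̲ u = ∂ₜ u − (Δ/r²) ∂ᵣ u`. -/
def opLb (M k : ℝ) (u : F4) : F4 := fun t r ϑ φ =>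
  dT u t r ϑ φ - ((Del M k r / r ^ 2 : ℝ) : ℂ) * dR u t r ϑ φ

/-- `w = Δ/r⁴`. -/
def ww (M k r : ℝ) : ℝ := Del M k r / r ^ 4
/-- `w′ = w·(6M − 2r)/r²`. -/
def wwP (M k r : ℝ) : ℝ := ww M k r * (6 * M - 2 * r) / r ^ 2

/-- The angular operator `𝓛⁽⁺²⁾`. -/
def angP (u : F4) : F4 := fun t r ϑ φ =>
  -(Real.sin ϑ : ℂ)⁻¹ * deriv (fun x => (Real.sin x : ℂ) * dTh u t r x φ) ϑ
  - (((Real.sin ϑ) ^ 2 : ℝ) : ℂ)⁻¹ * dPh (dPh u) t r ϑ φ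
  - 4 * Complex.I * ((Real.cos ϑ / (Real.sin ϑ) ^ 2 : ℝ) : ℂ) * dPh u t r ϑ φ
  + 4 * (((Real.cos ϑ / Real.sin ϑ) ^ 2 : ℝ) : ℂ) * u t r ϑ φ
  + 4 * u t r ϑ φ

/-- The angular operator `𝓛⁽⁻²⁾`. -/
def angM (u : F4) : F4 := fun t r ϑ φ =>
  -(Real.sin ϑ : ℂ)⁻¹ * deriv (fun x => (Real.sin x : ℂ) * dTh u t r x φ) ϑ
  - (((Real.sin ϑ) ^ 2 : ℝ) : ℂ)⁻¹ * dPh (dPh u) t r ϑ φ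
  + 4 * Complex.I * ((Real.cos ϑ / (Real.sin ϑ) ^ 2 : ℝ) : ℂ) * dPh u t r ϑ φ
  + 4 * (((Real.cos ϑ / Real.sin ϑ) ^ 2 : ℝ) : ℂ) * u t r ϑ φ
  + 4 * u t r ϑ φ

/-- The Teukolsky operator `𝔗⁽⁺²⁾u = −LL̲u + 2(w′/w)L̲u − w(𝓛⁽⁺²⁾ − 2 + 6M/r)u`. -/
def Tp (M k : ℝ) (u : F4) : F4 := fun t r ϑ φ =>
  - opL M k (opLb M k u) t r ϑ φ
  + 2 * ((wwP M k r / ww M k r : ℝ) : ℂ) * opLb M k u t r ϑ φ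
  - ((ww M k r : ℝ) : ℂ) *
      (angP u t r ϑ φ - 2 * u t r ϑ φ + ((6 * M / r : ℝ) : ℂ) * u t r ϑ φ)

/-- The Teukolsky operator `𝔗⁽⁻²⁾u = −LL̲u − 2(w′/w)Lu − w(𝓛⁽⁻²⁾ − 2 + 6M/r)u`. -/
def Tm (M k : ℝ) (u : F4) : F4 := fun t r ϑ φ =>
  - opL M k (opLb M k u) t r ϑ φ
  - 2 * ((wwP M k r / ww M k r : ℝ) : ℂ) * opL M k u t r ϑ φ
  - ((ww M k r : ℝ) : ℂ) *
      (angM u t r ϑ φ - 2 * u t r ϑ φ + ((6 * M / r : ℝ) : ℂ) * u t r ϑ φ)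

/-- The Regge–Wheeler operator `𝕽⁽⁺²⁾u = −LL̲u − w(𝓛⁽⁺²⁾ − 6M/r)u`. -/
def RWp (M k : ℝ) (u : F4) : F4 := fun t r ϑ φ =>
  - opL M k (opLb M k u) t r ϑ φ
  - ((ww M k r : ℝ) : ℂ) * (angP u t r ϑ φ - ((6 * M / r : ℝ) : ℂ) * u t r ϑ φ)

/-- The Regge–Wheeler operator `𝕽⁽⁻²⁾u = −LL̲u − w(𝓛⁽⁻²⁾ − 6M/r)u`. -/
def RWm (M k : ℝ) (u : F4) : F4 := fun t r ϑ φ =>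
  - opL M k (opLb M k u) t r ϑ φ
  - ((ww M k r : ℝ) : ℂ) * (angM u t r ϑ φ - ((6 * M / r : ℝ) : ℂ) * u t r ϑ φ)

/-- The exterior region `Ω = {r > r₊, 0 < ϑ < π}` (as a subset of ℝ⁴). -/
def OmSet (rp : ℝ) : Set (ℝ × ℝ × ℝ × ℝ) :=
  {p | rp < p.2.1 ∧ 0 < p.2.2.1 ∧ p.2.2.1 < Real.pi}

/-- `u` is smooth on `Ω`. -/
def SmoothOnOm (rp : ℝ) (u : F4) : Prop :=
  ContDiffOn ℝ (⊤ : ℕ∞)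
    (fun p : ℝ × ℝ × ℝ × ℝ => u p.1 p.2.1 p.2.2.1 p.2.2.2) (OmSet rp)

/-- Multiplication by `w⁻¹`. -/
def winv (M k : ℝ) (u : F4) : F4 := fun t r ϑ φ => ((ww M k r : ℝ) : ℂ)⁻¹ * u t r ϑ φ
/-- Multiplication by `w`. -/
def wmul (M k : ℝ) (u : F4) : F4 := fun t r ϑ φ => ((ww M k r : ℝ) : ℂ) * u t r ϑ φ
/-- Pointwise complex conjugation. -/
def conjF (u : F4) : F4 := fun t r ϑ φ => (starRingEnd ℂ) (u t r ϑ φ)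

/-- `𝓛⁽⁺²⁾(𝓛⁽⁺²⁾ − 2)`. -/
def angSqP (u : F4) : F4 := angP (fun t r ϑ φ => angP u t r ϑ φ - 2 * u t r ϑ φ)
/-- `𝓛⁽⁻²⁾(𝓛⁽⁻²⁾ − 2)`. -/
def angSqM (u : F4) : F4 := angM (fun t r ϑ φ => angM u t r ϑ φ - 2 * u t r ϑ φ)

/-- `𝓛⁽⁺²⁾(𝓛⁽⁺²⁾ − 2) + 12M∂ₜ`. -/
def TSp (M : ℝ) (u : F4) : F4 := fun t r ϑ φ =>
  angSqP u t r ϑ φ + 12 * (M : ℂ) * dT u t r ϑ φ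
/-- `𝓛⁽⁻²⁾(𝓛⁽⁻²⁾ − 2) − 12M∂ₜ`. -/
def TSm (M : ℝ) (u : F4) : F4 := fun t r ϑ φ =>
  angSqM u t r ϑ φ - 12 * (M : ℂ) * dT u t r ϑ φ


/-!
With `X = ∂ₜ` and `Y = (Δ/r²)∂ᵣ` we have `L = X + Y` and `L̲ = X − Y`. Expanding both sides by
linearity and using `L + L̲ = 2∂ₜ`, everything cancels except the claim
`½(LL − L̲L̲)(Ψ⁺ − (Ψ⁻)*) = 𝓛(𝓛−2)(L − L̲)∂ₜΦ`.
Since `X` and `Y` commute (Clairaut), `LL − L̲L̲ = 4YX`. The operator `𝓛(𝓛−2)` commutes with `X`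
and `Y`, as it involves only `ϑ`- and `φ`-derivatives with coefficients depending on `ϑ` alone.
Hence the right side is `2YX𝓛(𝓛−2)Φ = 2YX(Ψ⁺ − (Ψ⁻)*)`, which is the left side.
-/

def EqOnOm (rp : ℝ) (u v : F4) : Prop :=
  ∀ t r ϑ φ, (t, r, ϑ, φ) ∈ OmSet rp → u t r ϑ φ = v t r ϑ φ

def unc (u : F4) : ℝ × ℝ × ℝ × ℝ → ℂ := fun p => u p.1 p.2.1 p.2.2.1 p.2.2.2

theorem isOpen_omSet (rp : ℝ) : IsOpen (OmSet rp) :=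
  (isOpen_lt continuous_const (by fun_prop : Continuous fun p : ℝ × ℝ × ℝ × ℝ => p.2.1)).inter
    ((isOpen_lt continuous_const (by fun_prop : Continuous fun p : ℝ × ℝ × ℝ × ℝ => p.2.2.1)).inter
      (isOpen_lt (by fun_prop : Continuous fun p : ℝ × ℝ × ℝ × ℝ => p.2.2.1) continuous_const))

namespace SmoothOnOm

variable {rp : ℝ} {u v : F4}

theorem differentiableAt (hu : SmoothOnOm rp u) {p : ℝ × ℝ × ℝ × ℝ} (hp : p ∈ OmSet rp) :
    DifferentiableAt ℝ (unc u) p :=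
  (ContDiffOn.contDiffAt hu ((isOpen_omSet rp).mem_nhds hp)).differentiableAt (by simp)

theorem add (hu : SmoothOnOm rp u) (hv : SmoothOnOm rp v) : SmoothOnOm rp (u + v) :=
  ContDiffOn.add hu hv

theorem sub (hu : SmoothOnOm rp u) (hv : SmoothOnOm rp v) : SmoothOnOm rp (u - v) :=
  ContDiffOn.sub hu hv

theorem mul (hu : SmoothOnOm rp u) (hv : SmoothOnOm rp v) : SmoothOnOm rp (u * v) :=
  ContDiffOn.mul hu hv

theorem const_smul (c : ℂ) (hu : SmoothOnOm rp u) : SmoothOnOm rp (c • u) :=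
  ContDiffOn.const_smul c hu

theorem conjF (hu : SmoothOnOm rp u) : SmoothOnOm rp (conjF u) :=
  Complex.conjCLE.contDiff.comp_contDiffOn hu

theorem congr (hv : SmoothOnOm rp v) (h : EqOnOm rp u v) : SmoothOnOm rp u :=
  ContDiffOn.congr hv fun p hp => h p.1 p.2.1 p.2.2.1 p.2.2.2 hp

end SmoothOnOm

-- `deriv` is junk where a function is not differentiable, so the operators below are linear only
-- on smooth functions, and only up to equality on `Ω`.
structure LinearOnOm (rp : ℝ) (T : F4 → F4) : Prop where
  smooth {u : F4} : SmoothOnOm rp u → SmoothOnOm rp (T u)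
  congr {u v : F4} : SmoothOnOm rp u → SmoothOnOm rp v → EqOnOm rp u v → EqOnOm rp (T u) (T v)
  map_add {u v : F4} : SmoothOnOm rp u → SmoothOnOm rp v → EqOnOm rp (T (u + v)) (T u + T v)
  map_smul (c : ℂ) {u : F4} : SmoothOnOm rp u → EqOnOm rp (T (c • u)) (c • T u)

namespace LinearOnOm

variable {rp : ℝ} {S T : F4 → F4} {u v w : F4}

theorem map_sub (hT : LinearOnOm rp T) (hu : SmoothOnOm rp u) (hv : SmoothOnOm rp v) :
    EqOnOm rp (T (u - v)) (T u - T v) := by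
  have hneg : u - v = u + (-1 : ℂ) • v := by rw [neg_one_smul, sub_eq_add_neg]
  intro t r ϑ φ hp
  have h₁ := hT.map_add hu (hv.const_smul (-1)) t r ϑ φ hp
  have h₂ := hT.map_smul (-1) hv t r ϑ φ hp
  simp only [Pi.add_apply, Pi.sub_apply, Pi.smul_apply, smul_eq_mul] at h₁ h₂ ⊢
  rw [hneg, h₁, h₂]
  ring

theorem map_add_add_smul (hT : LinearOnOm rp T) (hu : SmoothOnOm rp u) (hv : SmoothOnOm rp v)
    (hw : SmoothOnOm rp w) (c : ℂ) :
    EqOnOm rp (T (u + v + c • w)) (T u + T v + c • T w) := by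
  intro t r ϑ φ hp
  have h₁ := hT.map_add (hu.add hv) (hw.const_smul c) t r ϑ φ hp
  have h₂ := hT.map_add hu hv t r ϑ φ hp
  have h₃ := hT.map_smul c hw t r ϑ φ hp
  simp only [Pi.add_apply, Pi.smul_apply, smul_eq_mul] at h₁ h₂ h₃ ⊢
  rw [h₁, h₂, h₃]

theorem of_eqOn (hT : LinearOnOm rp T) (h : ∀ u, SmoothOnOm rp u → EqOnOm rp (S u) (T u)) :
    LinearOnOm rp S where
  smooth hu := (hT.smooth hu).congr (h _ hu)
  congr hu hv huv t r ϑ φ hp := by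
    rw [h _ hu t r ϑ φ hp, h _ hv t r ϑ φ hp, hT.congr hu hv huv t r ϑ φ hp]
  map_add hu hv t r ϑ φ hp := by
    simp only [Pi.add_apply]
    rw [h _ (hu.add hv) t r ϑ φ hp, h _ hu t r ϑ φ hp, h _ hv t r ϑ φ hp]
    exact hT.map_add hu hv t r ϑ φ hp
  map_smul c u hu t r ϑ φ hp := by
    simp only [Pi.smul_apply]
    rw [h _ (hu.const_smul c) t r ϑ φ hp, h _ hu t r ϑ φ hp]
    exact hT.map_smul c hu t r ϑ φ hp

theorem id : LinearOnOm rp fun u => u where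
  smooth hu := hu
  congr _ _ huv := huv
  map_add _ _ _ _ _ _ _ := rfl
  map_smul _ _ _ _ _ _ _ _ := rfl

theorem const_mul {c : F4} (hc : SmoothOnOm rp c) : LinearOnOm rp fun u => c * u where
  smooth hu := hc.mul hu
  congr _ _ huv t r ϑ φ hp := by simp only [Pi.mul_apply, huv t r ϑ φ hp]
  map_add _ _ _ _ _ _ _ := by simp only [Pi.mul_apply, Pi.add_apply]; ring
  map_smul _ _ _ _ _ _ _ _ := by simp only [Pi.mul_apply, Pi.smul_apply, smul_eq_mul]; ring

theorem comp (hS : LinearOnOm rp S) (hT : LinearOnOm rp T) : LinearOnOm rp fun u => S (T u) where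
  smooth hu := hS.smooth (hT.smooth hu)
  congr hu hv huv := hS.congr (hT.smooth hu) (hT.smooth hv) (hT.congr hu hv huv)
  map_add hu hv t r ϑ φ hp := by
    rw [hS.congr (hT.smooth (hu.add hv)) ((hT.smooth hu).add (hT.smooth hv))
      (hT.map_add hu hv) t r ϑ φ hp]
    exact hS.map_add (hT.smooth hu) (hT.smooth hv) t r ϑ φ hp
  map_smul c u hu t r ϑ φ hp := by
    rw [hS.congr (hT.smooth (hu.const_smul c)) ((hT.smooth hu).const_smul c)
      (hT.map_smul c hu) t r ϑ φ hp]
    exact hS.map_smul c (hT.smooth hu) t r ϑ φ hp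

theorem add (hS : LinearOnOm rp S) (hT : LinearOnOm rp T) : LinearOnOm rp fun u => S u + T u where
  smooth hu := (hS.smooth hu).add (hT.smooth hu)
  congr hu hv huv t r ϑ φ hp := by
    simp only [Pi.add_apply, hS.congr hu hv huv t r ϑ φ hp, hT.congr hu hv huv t r ϑ φ hp]
  map_add hu hv t r ϑ φ hp := by
    have h₁ := hS.map_add hu hv t r ϑ φ hp
    have h₂ := hT.map_add hu hv t r ϑ φ hp
    simp only [Pi.add_apply] at h₁ h₂ ⊢
    rw [h₁, h₂]; ring
  map_smul c u hu t r ϑ φ hp := by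
    have h₁ := hS.map_smul c hu t r ϑ φ hp
    have h₂ := hT.map_smul c hu t r ϑ φ hp
    simp only [Pi.add_apply, Pi.smul_apply, smul_eq_mul] at h₁ h₂ ⊢
    rw [h₁, h₂]; ring

theorem const_smul (a : ℂ) (hT : LinearOnOm rp T) : LinearOnOm rp fun u => a • T u where
  smooth hu := (hT.smooth hu).const_smul a
  congr hu hv huv t r ϑ φ hp := by
    simp only [Pi.smul_apply, hT.congr hu hv huv t r ϑ φ hp]
  map_add hu hv t r ϑ φ hp := by
    have h := hT.map_add hu hv t r ϑ φ hp
    simp only [Pi.add_apply, Pi.smul_apply, smul_eq_mul] at h ⊢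
    rw [h]; ring
  map_smul c u hu t r ϑ φ hp := by
    have h := hT.map_smul c hu t r ϑ φ hp
    simp only [Pi.smul_apply, smul_eq_mul] at h ⊢
    rw [h]; ring

theorem sub (hS : LinearOnOm rp S) (hT : LinearOnOm rp T) : LinearOnOm rp fun u => S u - T u :=
  (hS.add (hT.const_smul (-1))).of_eqOn fun _ _ _ _ _ _ _ => by
    simp only [Pi.sub_apply, Pi.add_apply, Pi.smul_apply, smul_eq_mul]; ring

end LinearOnOm

structure CommuteOnOm (rp : ℝ) (S T : F4 → F4) : Prop where
  left : LinearOnOm rp S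
  right : LinearOnOm rp T
  comm {u : F4} : SmoothOnOm rp u → EqOnOm rp (S (T u)) (T (S u))

namespace CommuteOnOm

variable {rp : ℝ} {S T T₁ T₂ : F4 → F4}

theorem symm (h : CommuteOnOm rp S T) : CommuteOnOm rp T S :=
  ⟨h.right, h.left, fun hu t r ϑ φ hp => (h.comm hu t r ϑ φ hp).symm⟩

theorem id (hS : LinearOnOm rp S) : CommuteOnOm rp S fun u => u :=
  ⟨hS, LinearOnOm.id, fun _ _ _ _ _ _ => rfl⟩

theorem const_mul_const_mul {c d : F4} (hc : SmoothOnOm rp c) (hd : SmoothOnOm rp d) :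
    CommuteOnOm rp (fun u => c * u) fun u => d * u :=
  ⟨.const_mul hc, .const_mul hd, fun _ _ _ _ _ _ => by simp only [Pi.mul_apply]; ring⟩

theorem comp (h₁ : CommuteOnOm rp S T₁) (h₂ : CommuteOnOm rp S T₂) :
    CommuteOnOm rp S fun u => T₁ (T₂ u) where
  left := h₁.left
  right := h₁.right.comp h₂.right
  comm hu t r ϑ φ hp := by
    rw [h₁.comm (h₂.right.smooth hu) t r ϑ φ hp]
    exact h₁.right.congr (h₁.left.smooth (h₂.right.smooth hu))
      (h₂.right.smooth (h₁.left.smooth hu)) (h₂.comm hu) t r ϑ φ hp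

theorem sub (h₁ : CommuteOnOm rp S T₁) (h₂ : CommuteOnOm rp S T₂) :
    CommuteOnOm rp S fun u => T₁ u - T₂ u where
  left := h₁.left
  right := h₁.right.sub h₂.right
  comm hu t r ϑ φ hp := by
    rw [h₁.left.map_sub (h₁.right.smooth hu) (h₂.right.smooth hu) t r ϑ φ hp]
    simp only [Pi.sub_apply]
    rw [h₁.comm hu t r ϑ φ hp, h₂.comm hu t r ϑ φ hp]

theorem const_smul (a : ℂ) (h : CommuteOnOm rp S T) : CommuteOnOm rp S fun u => a • T u where
  left := h.left
  right := h.right.const_smul a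
  comm hu t r ϑ φ hp := by
    rw [h.left.map_smul a (h.right.smooth hu) t r ϑ φ hp]
    simp only [Pi.smul_apply]
    rw [h.comm hu t r ϑ φ hp]

theorem of_eqOn (h : CommuteOnOm rp S T) {T' : F4 → F4}
    (hT' : ∀ u, SmoothOnOm rp u → EqOnOm rp (T' u) (T u)) : CommuteOnOm rp S T' where
  left := h.left
  right := h.right.of_eqOn hT'
  comm {u} hu t r ϑ φ hp := by
    have hT'u : SmoothOnOm rp (T' u) := (h.right.smooth hu).congr (hT' u hu)
    rw [h.left.congr hT'u (h.right.smooth hu) (hT' u hu) t r ϑ φ hp, h.comm hu t r ϑ φ hp,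
      hT' _ (h.left.smooth hu) t r ϑ φ hp]

end CommuteOnOm

-- `dT`, `dR`, `dTh`, `dPh` agree with `dirDeriv` on smooth functions, so linearity, locality and
-- Clairaut's theorem need to be proved only once, for `dirDeriv`.
def dirDeriv (e : ℝ × ℝ × ℝ × ℝ) (u : F4) : F4 := fun t r ϑ φ => fderiv ℝ (unc u) (t, r, ϑ, φ) e

section PartialDerivative

variable {rp : ℝ} {u c : F4}

theorem SmoothOnOm.contDiffOn_fderiv (hu : SmoothOnOm rp u) :
    ContDiffOn ℝ (⊤ : ℕ∞) (fderiv ℝ (unc u)) (OmSet rp) :=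
  ContDiffOn.fderiv_of_isOpen hu (isOpen_omSet rp) (by exact_mod_cast le_top)

theorem SmoothOnOm.dirDeriv (hu : SmoothOnOm rp u) (e : ℝ × ℝ × ℝ × ℝ) :
    SmoothOnOm rp (dirDeriv e u) :=
  hu.contDiffOn_fderiv.clm_apply contDiffOn_const

theorem linearOnOm_dirDeriv (e : ℝ × ℝ × ℝ × ℝ) : LinearOnOm rp (dirDeriv e) where
  smooth hu := hu.dirDeriv e
  congr {u v} _ _ huv t r ϑ φ hp := by
    have h : unc u =ᶠ[𝓝 (t, r, ϑ, φ)] unc v :=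
      Filter.eventuallyEq_of_mem ((isOpen_omSet rp).mem_nhds hp) fun q hq =>
        huv q.1 q.2.1 q.2.2.1 q.2.2.2 hq
    simp only [dirDeriv, h.fderiv_eq]
  map_add hu hv t r ϑ φ hp := by
    simp only [dirDeriv, Pi.add_apply]
    rw [show unc (_ + _) = unc _ + unc _ from rfl,
      fderiv_add (hu.differentiableAt hp) (hv.differentiableAt hp)]
    rfl
  map_smul c _ hu t r ϑ φ hp := by
    simp only [dirDeriv, Pi.smul_apply]
    rw [show unc (c • _) = c • unc _ from rfl, fderiv_const_smul (hu.differentiableAt hp)]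
    rfl

theorem commuteOnOm_dirDeriv (e e' : ℝ × ℝ × ℝ × ℝ) :
    CommuteOnOm rp (dirDeriv e) (dirDeriv e') := by
  refine ⟨linearOnOm_dirDeriv e, linearOnOm_dirDeriv e', fun {u} hu t r ϑ φ hp => ?_⟩
  have hsnd : ∀ v w,
      dirDeriv v (dirDeriv w u) t r ϑ φ = fderiv ℝ (fderiv ℝ (unc u)) (t, r, ϑ, φ) v w :=
    fun v w => by
      have hd : DifferentiableAt ℝ (fderiv ℝ (unc u)) (t, r, ϑ, φ) :=
        (hu.contDiffOn_fderiv.contDiffAt ((isOpen_omSet rp).mem_nhds hp)).differentiableAt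
          (by simp)
      show fderiv ℝ (fun q => fderiv ℝ (unc u) q w) (t, r, ϑ, φ) v = _
      rw [fderiv_clm_apply hd (differentiableAt_const w)]
      simp
  have hsymm : IsSymmSndFDerivAt ℝ (unc u) (t, r, ϑ, φ) :=
    (ContDiffOn.contDiffAt hu ((isOpen_omSet rp).mem_nhds hp)).isSymmSndFDerivAt (by
      rw [minSmoothness_of_isRCLikeNormedField]; exact WithTop.coe_le_coe.mpr le_top)
  rw [hsnd, hsnd, hsymm]

theorem commuteOnOm_dirDeriv_const_mul (e : ℝ × ℝ × ℝ × ℝ) (hc : SmoothOnOm rp c)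
    (hc₀ : EqOnOm rp (dirDeriv e c) 0) : CommuteOnOm rp (dirDeriv e) fun u => c * u := by
  refine ⟨linearOnOm_dirDeriv e, .const_mul hc, fun {u} hu t r ϑ φ hp => ?_⟩
  simp only [dirDeriv, Pi.mul_apply]
  rw [show unc (c * u) = unc c * unc u from rfl,
    fderiv_mul (hc.differentiableAt hp) (hu.differentiableAt hp)]
  have h := hc₀ t r ϑ φ hp
  simp only [dirDeriv, Pi.zero_apply] at h
  simp only [add_apply, smul_apply, h, smul_eq_mul, mul_zero, add_zero]
  rfl

end PartialDerivative

section CoordinateDerivatives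

variable {rp : ℝ} {u c : F4} {S T : F4 → F4} {t r ϑ φ : ℝ}

theorem dT_eqOn_dirDeriv (u : F4) (hu : SmoothOnOm rp u) :
    EqOnOm rp (dT u) (dirDeriv (1, 0, 0, 0) u) :=
  fun t r ϑ φ hp => by
    have h := (hu.differentiableAt hp).hasFDerivAt.comp_hasDerivAt t
      ((hasDerivAt_id t).prodMk (hasDerivAt_const t (r, ϑ, φ)))
    exact h.deriv

theorem dR_eqOn_dirDeriv (u : F4) (hu : SmoothOnOm rp u) :
    EqOnOm rp (dR u) (dirDeriv (0, 1, 0, 0) u) :=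
  fun t r ϑ φ hp => by
    have h := (hu.differentiableAt hp).hasFDerivAt.comp_hasDerivAt r
      ((hasDerivAt_const r t).prodMk ((hasDerivAt_id r).prodMk (hasDerivAt_const r (ϑ, φ))))
    exact h.deriv

theorem hasDerivAt_dTh (hu : DifferentiableAt ℝ (unc u) (t, r, ϑ, φ)) :
    HasDerivAt (fun s => u t r s φ) (dirDeriv (0, 0, 1, 0) u t r ϑ φ) ϑ := by
  have h := hu.hasFDerivAt.comp_hasDerivAt ϑ ((hasDerivAt_const ϑ t).prodMk
    ((hasDerivAt_const ϑ r).prodMk ((hasDerivAt_id ϑ).prodMk (hasDerivAt_const ϑ φ))))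
  exact h

theorem dTh_eqOn_dirDeriv (u : F4) (hu : SmoothOnOm rp u) :
    EqOnOm rp (dTh u) (dirDeriv (0, 0, 1, 0) u) :=
  fun _ _ _ _ hp => (hasDerivAt_dTh (hu.differentiableAt hp)).deriv

theorem dPh_eqOn_dirDeriv (u : F4) (hu : SmoothOnOm rp u) :
    EqOnOm rp (dPh u) (dirDeriv (0, 0, 0, 1) u) :=
  fun t r ϑ φ hp => by
    have h := (hu.differentiableAt hp).hasFDerivAt.comp_hasDerivAt φ
      ((hasDerivAt_const φ t).prodMk ((hasDerivAt_const φ r).prodMk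
        ((hasDerivAt_const φ ϑ).prodMk (hasDerivAt_id φ))))
    exact h.deriv

theorem commuteOnOm_of_eqOn_dirDeriv {e e' : ℝ × ℝ × ℝ × ℝ}
    (hS : ∀ u, SmoothOnOm rp u → EqOnOm rp (S u) (dirDeriv e u))
    (hT : ∀ u, SmoothOnOm rp u → EqOnOm rp (T u) (dirDeriv e' u)) : CommuteOnOm rp S T :=
  (((commuteOnOm_dirDeriv e e').of_eqOn hT).symm.of_eqOn hS).symm

theorem commuteOnOm_const_mul_of_eqOn_dirDeriv {e : ℝ × ℝ × ℝ × ℝ}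
    (hS : ∀ u, SmoothOnOm rp u → EqOnOm rp (S u) (dirDeriv e u)) (hc : SmoothOnOm rp c)
    (hc₀ : EqOnOm rp (S c) 0) : CommuteOnOm rp S fun u => c * u :=
  ((commuteOnOm_dirDeriv_const_mul e hc fun t r ϑ φ hp => (hS c hc t r ϑ φ hp).symm.trans
    (hc₀ t r ϑ φ hp)).symm.of_eqOn hS).symm

end CoordinateDerivatives

def radialCoeff (g : ℝ → ℝ) : F4 := fun _ r _ _ => (g r : ℂ)

def polarCoeff (g : ℝ → ℝ) : F4 := fun _ _ ϑ _ => (g ϑ : ℂ)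

section Coefficients

variable {rp : ℝ} {g : ℝ → ℝ}

theorem smoothOnOm_radialCoeff (hg : ContDiffOn ℝ (⊤ : ℕ∞) g (Ioi rp)) :
    SmoothOnOm rp (radialCoeff g) :=
  Complex.ofRealCLM.contDiff.comp_contDiffOn
    (hg.comp contDiff_snd.fst.contDiffOn fun _ hp => hp.1)

theorem smoothOnOm_polarCoeff (hg : ContDiffOn ℝ (⊤ : ℕ∞) g (Ioo 0 Real.pi)) :
    SmoothOnOm rp (polarCoeff g) :=
  Complex.ofRealCLM.contDiff.comp_contDiffOn
    (hg.comp contDiff_snd.snd.fst.contDiffOn fun _ hp => hp.2)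

end Coefficients

def radialDeriv (M k : ℝ) (u : F4) : F4 := radialCoeff (fun r => Del M k r / r ^ 2) * dR u

theorem opL_eq (M k : ℝ) (u : F4) : opL M k u = dT u + radialDeriv M k u := rfl

theorem opLb_eq (M k : ℝ) (u : F4) : opLb M k u = dT u - radialDeriv M k u := rfl

-- `𝓛⁽⁺²⁾` with the `ϑ`-derivative expanded by Leibniz's rule and `4 + 4cot²ϑ = 4/sin²ϑ`.
def angPExpanded (u : F4) : F4 :=
  polarCoeff (fun x => 1 / Real.sin x ^ 2) *
      ((4 : ℂ) • u - dPh (dPh u) - (4 * Complex.I) • (polarCoeff Real.cos * dPh u))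
    - dTh (dTh u) - polarCoeff (fun x => Real.cos x / Real.sin x) * dTh u

section Angular

variable {rp : ℝ}

theorem angP_eqOn_angPExpanded (u : F4) (hu : SmoothOnOm rp u) :
    EqOnOm rp (angP u) (angPExpanded u) := by
  intro t r ϑ φ hp
  have hsin : Real.sin ϑ ≠ 0 := (Real.sin_pos_of_pos_of_lt_pi hp.2.1 hp.2.2).ne'
  have hdTh : HasDerivAt (fun x => dTh u t r x φ) (dTh (dTh u) t r ϑ φ) ϑ :=
    (hasDerivAt_dTh (((hu.dirDeriv _).congr (dTh_eqOn_dirDeriv u hu)).differentiableAt hp))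
      |>.differentiableAt.hasDerivAt
  have hprod : deriv (fun x => (Real.sin x : ℂ) * dTh u t r x φ) ϑ = _ :=
    (((Real.hasDerivAt_sin ϑ).ofReal_comp).mul hdTh).deriv
  have hsin' : Complex.sin ϑ ≠ 0 := by exact_mod_cast hsin
  simp only [angP, angPExpanded, hprod, polarCoeff, Pi.sub_apply, Pi.mul_apply, Pi.smul_apply,
    smul_eq_mul]
  push_cast
  field_simp
  linear_combination (4 * u t r ϑ φ) * Complex.sin_sq_add_cos_sq (ϑ : ℂ)

theorem contDiffOn_one_div_sin_sq :
    ContDiffOn ℝ (⊤ : ℕ∞) (fun x => 1 / Real.sin x ^ 2) (Ioo 0 Real.pi) := by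
  fun_prop (disch := intros; simp_all [(Real.sin_pos_of_mem_Ioo ‹_›).ne'])

theorem contDiffOn_cos_div_sin :
    ContDiffOn ℝ (⊤ : ℕ∞) (fun x => Real.cos x / Real.sin x) (Ioo 0 Real.pi) := by
  fun_prop (disch := intros; simp_all [(Real.sin_pos_of_mem_Ioo ‹_›).ne'])

variable {S : F4 → F4}

theorem CommuteOnOm.angPExpanded (hTh : CommuteOnOm rp S dTh) (hPh : CommuteOnOm rp S dPh)
    (hcoeff : ∀ g, ContDiffOn ℝ (⊤ : ℕ∞) g (Ioo 0 Real.pi) →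
      CommuteOnOm rp S fun u => polarCoeff g * u) :
    CommuteOnOm rp S angPExpanded :=
  ((((hcoeff _ contDiffOn_one_div_sin_sq).comp ((((CommuteOnOm.id hTh.left).const_smul 4).sub
    (hPh.comp hPh)).sub (((hcoeff _ Real.contDiff_cos.contDiffOn).comp hPh).const_smul _))).sub
    (hTh.comp hTh)).sub ((hcoeff _ contDiffOn_cos_div_sin).comp hTh))

theorem CommuteOnOm.angSqP (hTh : CommuteOnOm rp S dTh) (hPh : CommuteOnOm rp S dPh)
    (hcoeff : ∀ g, ContDiffOn ℝ (⊤ : ℕ∞) g (Ioo 0 Real.pi) →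
      CommuteOnOm rp S fun u => polarCoeff g * u) :
    CommuteOnOm rp S angSqP :=
  have hangP := (CommuteOnOm.angPExpanded hTh hPh hcoeff).of_eqOn angP_eqOn_angPExpanded
  hangP.comp (hangP.sub ((CommuteOnOm.id hTh.left).const_smul 2))

end Angular

section Identity

variable {rp : ℝ} {L Lb X Y Q : F4 → F4}

theorem CommuteOnOm.linearOnOm_of_eq_add (hXY : CommuteOnOm rp X Y)
    (hL : ∀ u, L u = X u + Y u) : LinearOnOm rp L :=
  (hXY.left.add hXY.right).of_eqOn fun u _ t r ϑ φ _ => by rw [hL]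

theorem CommuteOnOm.linearOnOm_of_eq_sub (hXY : CommuteOnOm rp X Y)
    (hLb : ∀ u, Lb u = X u - Y u) : LinearOnOm rp Lb :=
  (hXY.left.sub hXY.right).of_eqOn fun u _ t r ϑ φ _ => by rw [hLb]

theorem CommuteOnOm.eqOn_sq_sub_sq (hXY : CommuteOnOm rp X Y) (hL : ∀ u, L u = X u + Y u)
    (hLb : ∀ u, Lb u = X u - Y u) {u : F4} (hu : SmoothOnOm rp u) :
    EqOnOm rp (L (L u) - Lb (Lb u)) ((4 : ℂ) • Y (X u)) := by
  intro t r ϑ φ hp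
  have hx := hXY.left.smooth hu
  have hy := hXY.right.smooth hu
  have h₁ := hXY.left.map_add hx hy t r ϑ φ hp
  have h₂ := hXY.right.map_add hx hy t r ϑ φ hp
  have h₃ := hXY.left.map_sub hx hy t r ϑ φ hp
  have h₄ := hXY.right.map_sub hx hy t r ϑ φ hp
  have h₅ := hXY.comm hu t r ϑ φ hp
  simp only [hL, hLb, Pi.add_apply, Pi.sub_apply, Pi.smul_apply, smul_eq_mul] at h₁ h₂ h₃ h₄ h₅ ⊢
  linear_combination h₁ + h₂ - h₃ + h₄ + 2 * h₅

theorem eqOn_comp_comp_of_commute {A B Φ : F4} (hQX : CommuteOnOm rp Q X)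
    (hQY : CommuteOnOm rp Q Y) (hA : SmoothOnOm rp A) (hB : SmoothOnOm rp B)
    (hΦ : SmoothOnOm rp Φ) (hΦeq : EqOnOm rp (Q Φ) (A - B)) :
    EqOnOm rp (Q (Y (X Φ))) (Y (X A) - Y (X B)) := fun t r ϑ φ hp => by
  have hYX := hQY.right.comp hQX.right
  rw [(hQY.comp hQX).comm hΦ t r ϑ φ hp,
    hYX.congr (hQX.left.smooth hΦ) (hA.sub hB) hΦeq t r ϑ φ hp, hYX.map_sub hA hB t r ϑ φ hp]

theorem eqOn_higher_order_identity {A B D R Φ : F4} {m : ℂ} (hm : m ≠ 0)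
    (hXY : CommuteOnOm rp X Y) (hQX : CommuteOnOm rp Q X) (hQY : CommuteOnOm rp Q Y)
    (hL : ∀ u, L u = X u + Y u) (hLb : ∀ u, Lb u = X u - Y u) (hA : SmoothOnOm rp A)
    (hB : SmoothOnOm rp B) (hΦ : SmoothOnOm rp Φ) (hΦeq : EqOnOm rp (Q Φ) (A - B))
    (hD : D = A - B) (hR : R = A + B + (12 * m) • X Φ) :
    EqOnOm rp (L (L A) + Lb (Lb B) + (6 * m)⁻¹ • Q (L A - Lb B))
      ((1 / 2 : ℂ) • (L (L R) + Lb (Lb R)) + (12 * m)⁻¹ • Q (L R - Lb R)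
        - (6 * m) • (L (L (X Φ)) + Lb (Lb (X Φ))) + (6 * m)⁻¹ • Q (X D)) := by
  intro t r ϑ φ hp
  subst hD hR
  have hLin := hXY.linearOnOm_of_eq_add hL
  have hLbLin := hXY.linearOnOm_of_eq_sub hLb
  have hQ := hQX.left
  have hX := hXY.left
  have hY := hXY.right
  have hP := hX.smooth hΦ
  have hLR : L (A + B + (12 * m) • X Φ) - Lb (A + B + (12 * m) • X Φ) =
      (2 : ℂ) • Y (A + B + (12 * m) • X Φ) := by
    funext t r ϑ φ
    simp only [hL, hLb, Pi.add_apply, Pi.sub_apply, Pi.smul_apply, smul_eq_mul]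
    ring
  have hLA : L A - Lb B = (X A + Y A) - (X B - Y B) := by rw [hL, hLb]
  have f₁ := (hLin.comp hLin).map_add_add_smul hA hB hP (12 * m) t r ϑ φ hp
  have f₂ := (hLbLin.comp hLbLin).map_add_add_smul hA hB hP (12 * m) t r ϑ φ hp
  have f₃ := hQ.map_smul 2 (hY.smooth ((hA.add hB).add (hP.const_smul (12 * m)))) t r ϑ φ hp
  have f₄ := (hQ.comp hY).map_add_add_smul hA hB hP (12 * m) t r ϑ φ hp
  have f₅ := hQ.map_sub ((hX.smooth hA).add (hY.smooth hA))
    ((hX.smooth hB).sub (hY.smooth hB)) t r ϑ φ hp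
  have f₆ := hQ.map_add (hX.smooth hA) (hY.smooth hA) t r ϑ φ hp
  have f₇ := hQ.map_sub (hX.smooth hB) (hY.smooth hB) t r ϑ φ hp
  have f₈ := (hQ.comp hX).map_sub hA hB t r ϑ φ hp
  have f₉ := hXY.eqOn_sq_sub_sq hL hLb hA t r ϑ φ hp
  have f₁₀ := hXY.eqOn_sq_sub_sq hL hLb hB t r ϑ φ hp
  have f₁₁ := eqOn_comp_comp_of_commute hQX hQY hA hB hΦ hΦeq t r ϑ φ hp
  rw [hLR, hLA]
  simp only [Pi.add_apply, Pi.sub_apply, Pi.smul_apply, smul_eq_mul] at *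
  rw [f₁, f₂, f₃, f₄, f₅, f₆, f₇, f₈]
  linear_combination (norm := (field_simp; ring)) f₉ / 2 - f₁₀ / 2 - 2 * f₁₁

end Identity

section SchwarzschildAdS

variable {rp : ℝ} {S : F4 → F4}

theorem contDiffOn_del_div_sq (M k : ℝ) (hrp : 0 ≤ rp) :
    ContDiffOn ℝ (⊤ : ℕ∞) (fun r => Del M k r / r ^ 2) (Ioi rp) := by
  unfold Del
  fun_prop (disch := intro r hr; exact pow_ne_zero _ (hrp.trans_lt hr).ne')

theorem commuteOnOm_radialDeriv (M k : ℝ) (hrp : 0 ≤ rp) {e : ℝ × ℝ × ℝ × ℝ}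
    (hS : ∀ u, SmoothOnOm rp u → EqOnOm rp (S u) (dirDeriv e u))
    (hS₀ : EqOnOm rp (S (radialCoeff fun r => Del M k r / r ^ 2)) 0) :
    CommuteOnOm rp S (radialDeriv M k) :=
  (commuteOnOm_const_mul_of_eqOn_dirDeriv hS
    (smoothOnOm_radialCoeff (contDiffOn_del_div_sq M k hrp)) hS₀).comp
    (commuteOnOm_of_eqOn_dirDeriv hS dR_eqOn_dirDeriv)

theorem commuteOnOm_dT_angSqP : CommuteOnOm rp dT angSqP :=
  CommuteOnOm.angSqP (commuteOnOm_of_eqOn_dirDeriv dT_eqOn_dirDeriv dTh_eqOn_dirDeriv)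
    (commuteOnOm_of_eqOn_dirDeriv dT_eqOn_dirDeriv dPh_eqOn_dirDeriv) fun _ hg =>
      commuteOnOm_const_mul_of_eqOn_dirDeriv dT_eqOn_dirDeriv (smoothOnOm_polarCoeff hg)
        fun _ _ _ _ _ => by simp [dT, polarCoeff]

theorem commuteOnOm_radialDeriv_angSqP (M k : ℝ) (hrp : 0 ≤ rp) :
    CommuteOnOm rp (radialDeriv M k) angSqP :=
  CommuteOnOm.angSqP
    (commuteOnOm_radialDeriv M k hrp dTh_eqOn_dirDeriv fun _ _ _ _ _ => by
      simp [dTh, radialCoeff]).symm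
    (commuteOnOm_radialDeriv M k hrp dPh_eqOn_dirDeriv fun _ _ _ _ _ => by
      simp [dPh, radialCoeff]).symm
    fun _ hg => ((CommuteOnOm.const_mul_const_mul (smoothOnOm_polarCoeff hg)
      (smoothOnOm_radialCoeff (contDiffOn_del_div_sq M k hrp))).comp
      (commuteOnOm_const_mul_of_eqOn_dirDeriv dR_eqOn_dirDeriv (smoothOnOm_polarCoeff hg)
        fun _ _ _ _ _ => by simp [dR, polarCoeff]).symm).symm

end SchwarzschildAdS

theorem statement5_general
    (M k rp : ℝ) (hM : 0 < M) (hrp : 0 < rp)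
    (Ψp Ψm Φ : F4)
    (hΨp : SmoothOnOm rp Ψp) (hΨm : SmoothOnOm rp Ψm) (hΦ : SmoothOnOm rp Φ)
    (hΦeq : ∀ t r ϑ φ : ℝ, (t, r, ϑ, φ) ∈ OmSet rp →
      angSqP Φ t r ϑ φ = Ψp t r ϑ φ - conjF Ψm t r ϑ φ)
    (PsiD PsiR : F4)
    (hD : PsiD = fun t r ϑ φ => Ψp t r ϑ φ - conjF Ψm t r ϑ φ)
    (hR : PsiR = fun t r ϑ φ =>
      Ψp t r ϑ φ + conjF Ψm t r ϑ φ + 12 * (M : ℂ) * dT Φ t r ϑ φ) :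
    ∀ t r ϑ φ : ℝ, (t, r, ϑ, φ) ∈ OmSet rp →
      opL M k (opL M k Ψp) t r ϑ φ + opLb M k (opLb M k (conjF Ψm)) t r ϑ φ
        + ((6 * M : ℝ) : ℂ)⁻¹ *
            angSqP (fun t r ϑ φ =>
              opL M k Ψp t r ϑ φ - opLb M k (conjF Ψm) t r ϑ φ) t r ϑ φ
      =
      (1 / 2 : ℂ) * (opL M k (opL M k PsiR) t r ϑ φ + opLb M k (opLb M k PsiR) t r ϑ φ)
        + ((12 * M : ℝ) : ℂ)⁻¹ *
            angSqP (fun t r ϑ φ =>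
              opL M k PsiR t r ϑ φ - opLb M k PsiR t r ϑ φ) t r ϑ φ
        - 6 * (M : ℂ) *
            (opL M k (opL M k (dT Φ)) t r ϑ φ + opLb M k (opLb M k (dT Φ)) t r ϑ φ)
        + ((6 * M : ℝ) : ℂ)⁻¹ * angSqP (dT PsiD) t r ϑ φ := by
  intro t r ϑ φ hp
  have key := eqOn_higher_order_identity (Complex.ofReal_ne_zero.mpr hM.ne')
    (commuteOnOm_radialDeriv M k hrp.le dT_eqOn_dirDeriv fun _ _ _ _ _ => by simp [dT, radialCoeff])
    commuteOnOm_dT_angSqP.symm (commuteOnOm_radialDeriv_angSqP M k hrp.le).symm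
    (opL_eq M k) (opLb_eq M k) hΨp hΨm.conjF hΦ hΦeq hD hR t r ϑ φ hp
  push_cast
  exact key

/-- The algebraic identity relating the mixed higher order
Regge–Wheeler boundary combination to `Ψᴰ` and `Ψᴿ`, where
`𝓛(𝓛−2)Φ = Ψ⁺ − (Ψ⁻)*`, `Ψᴰ = Ψ⁺ − (Ψ⁻)*` and `Ψᴿ = Ψ⁺ + (Ψ⁻)* + 12M∂ₜΦ`. -/
theorem statement5
    (M k rp : ℝ) (hM : 0 < M) (hk : 0 < k) (hrp : 0 < rp)
    (hroot : rp + k ^ 2 * rp ^ 3 - 2 * M = 0)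
    (Ψp Ψm Φ : F4)
    (hΨp : SmoothOnOm rp Ψp) (hΨm : SmoothOnOm rp Ψm) (hΦ : SmoothOnOm rp Φ)
    (hΦeq : ∀ t r ϑ φ : ℝ, (t, r, ϑ, φ) ∈ OmSet rp →
      angSqP Φ t r ϑ φ = Ψp t r ϑ φ - conjF Ψm t r ϑ φ)
    (PsiD PsiR : F4)
    (hD : PsiD = fun t r ϑ φ => Ψp t r ϑ φ - conjF Ψm t r ϑ φ)
    (hR : PsiR = fun t r ϑ φ =>
      Ψp t r ϑ φ + conjF Ψm t r ϑ φ + 12 * (M : ℂ) * dT Φ t r ϑ φ) :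
    ∀ t r ϑ φ : ℝ, (t, r, ϑ, φ) ∈ OmSet rp →
      opL M k (opL M k Ψp) t r ϑ φ + opLb M k (opLb M k (conjF Ψm)) t r ϑ φ
        + ((6 * M : ℝ) : ℂ)⁻¹ *
            angSqP (fun t r ϑ φ =>
              opL M k Ψp t r ϑ φ - opLb M k (conjF Ψm) t r ϑ φ) t r ϑ φ
      =
      (1 / 2 : ℂ) * (opL M k (opL M k PsiR) t r ϑ φ + opLb M k (opLb M k PsiR) t r ϑ φ)
        + ((12 * M : ℝ) : ℂ)⁻¹ *
            angSqP (fun t r ϑ φ =>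
              opL M k PsiR t r ϑ φ - opLb M k PsiR t r ϑ φ) t r ϑ φ
        - 6 * (M : ℂ) *
            (opL M k (opL M k (dT Φ)) t r ϑ φ + opLb M k (opLb M k (dT Φ)) t r ϑ φ)
        + ((6 * M : ℝ) : ℂ)⁻¹ * angSqP (dT PsiD) t r ϑ φ :=
  statement5_general M k rp hM hrp Ψp Ψm Φ hΨp hΨm hΦ hΦeq PsiD PsiR hD hR

end Grav
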